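/- arXiv:2506.16005 — 2 statements merged into one kernel-verified Lean document; each statement's English description precedes it below -/
import Mathlib

section
/- Let G be a group of unitaries on ℂ^d generated by elements of the form exp(iθP) with θ ∈ ℝ and P ranging over a fixed set S of Hermitian involutions (P† = P, P² = 1). Then a matrix Ω satisfies UᵀΩU = Ω for every U ∈ G if and only if PᵀΩ + ΩP = 0 for every P ∈ S. -/
/-!
The matrices `U` with `Uᵀ * Ω * U = Ω` form a submonoid, so invariance under the generated
monoid reduces to invariance under the generators `exp (θ • (I • P))`. For a one-parameter family
`exp (t • A)` invariance for all real `t` is equivalent to `Aᵀ * Ω + Ω * A = 0`: differentiating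
at `t = 0` gives this condition, and conversely the condition says that `Ω` intertwines `A` with
`-Aᵀ`, hence `exp (t • A)` with `exp (-t • Aᵀ)`. For `A = I • P` the condition is
`I • (Pᵀ * Ω + Ω * P) = 0`.
-/

open Matrix

namespace Matrix

variable {n R : Type*} [Fintype n] [DecidableEq n]

def isometrySubmonoid [CommSemiring R] (Ω : Matrix n n R) : Submonoid (Matrix n n R) where
  carrier := {U | Uᵀ * Ω * U = Ω}
  one_mem' := by simp
  mul_mem' {U V} hU hV := by
    simp only [Set.mem_ofPred_eq, transpose_mul] at hU hV ⊢
    calc Vᵀ * Uᵀ * Ω * (U * V) = Vᵀ * (Uᵀ * Ω * U) * V := by simp only [mul_assoc]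
      _ = Ω := by rw [hU, hV]

@[simp]
theorem mem_isometrySubmonoid [CommSemiring R] {Ω U : Matrix n n R} :
    U ∈ isometrySubmonoid Ω ↔ Uᵀ * Ω * U = Ω :=
  Iff.rfl

section Exponential

variable {𝕂 : Type*} [RCLike 𝕂]

theorem exp_smul_mem_isometrySubmonoid_of_add_eq_zero {Ω A : Matrix n n 𝕂}
    (h : Aᵀ * Ω + Ω * A = 0) (t : ℝ) :
    NormedSpace.exp (t • A) ∈ isometrySubmonoid Ω := by
  have hsemiconj : SemiconjBy Ω (t • A) (-(t • A)ᵀ) := by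
    rw [SemiconjBy, transpose_smul, neg_mul, smul_mul_assoc, mul_smul_comm,
      eq_neg_of_add_eq_zero_right h, smul_neg]
  rw [mem_isometrySubmonoid, ← exp_transpose]
  open scoped Norms.Operator in
  have := hsemiconj.exp_neg_mul_mul_exp_eq_self
  rw [neg_neg] at this
  -- `exact`, not `simpa`: the two `exp`s are taken for defeq but distinct matrix topologies
  exact this

theorem add_eq_zero_of_forall_exp_smul_mem_isometrySubmonoid {Ω A : Matrix n n 𝕂}
    (h : ∀ t : ℝ, NormedSpace.exp (t • A) ∈ isometrySubmonoid Ω) :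
    Aᵀ * Ω + Ω * A = 0 := by
  open scoped Norms.Operator in
  have hderiv : HasDerivAt
      (fun t : ℝ => NormedSpace.exp (t • Aᵀ) * Ω * NormedSpace.exp (t • A))
      (Aᵀ * Ω + Ω * A) 0 := by
    have := ((hasDerivAt_exp_smul_const Aᵀ (0 : ℝ)).mul_const Ω).mul
      (hasDerivAt_exp_smul_const A (0 : ℝ))
    simp only [zero_smul, NormedSpace.exp_zero, one_mul, mul_one] at this
    exact this
  have hconst : (fun t : ℝ => NormedSpace.exp (t • Aᵀ) * Ω * NormedSpace.exp (t • A)) =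
      fun _ => Ω := by
    funext t
    simpa [← transpose_smul, exp_transpose] using h t
  rw [hconst] at hderiv
  exact hderiv.unique (hasDerivAt_const 0 Ω)

theorem forall_exp_smul_mem_isometrySubmonoid_iff {Ω A : Matrix n n 𝕂} :
    (∀ t : ℝ, NormedSpace.exp (t • A) ∈ isometrySubmonoid Ω) ↔ Aᵀ * Ω + Ω * A = 0 :=
  ⟨add_eq_zero_of_forall_exp_smul_mem_isometrySubmonoid,
    exp_smul_mem_isometrySubmonoid_of_add_eq_zero⟩

end Exponential

end Matrix

theorem invariant_form_iff_generator_condition_general (d : ℕ)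
    (S : Set (Matrix (Fin d) (Fin d) ℂ))
    (Ω : Matrix (Fin d) (Fin d) ℂ) :
    (∀ U ∈ Submonoid.closure
        {M : Matrix (Fin d) (Fin d) ℂ |
          ∃ θ : ℝ, ∃ P ∈ S, M = NormedSpace.exp ((θ : ℂ) • Complex.I • P)},
      Uᵀ * Ω * U = Ω) ↔ (∀ P ∈ S, Pᵀ * Ω + Ω * P = 0) := by
  set T := {M : Matrix (Fin d) (Fin d) ℂ |
    ∃ θ : ℝ, ∃ P ∈ S, M = NormedSpace.exp ((θ : ℂ) • Complex.I • P)}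
  have hT : T ⊆ isometrySubmonoid Ω ↔
      ∀ P ∈ S, ∀ θ : ℝ, NormedSpace.exp (θ • Complex.I • P) ∈ isometrySubmonoid Ω := by
    simp only [T, Set.ofPred_subset, SetLike.mem_coe, forall_exists_index, and_imp,
      Complex.coe_smul]
    exact ⟨fun h P hP θ => h _ θ P hP rfl, fun h _ θ P hP hM => hM ▸ h P hP θ⟩
  calc (∀ U ∈ Submonoid.closure T, Uᵀ * Ω * U = Ω)
      ↔ ∀ P ∈ S, ∀ θ : ℝ, NormedSpace.exp (θ • Complex.I • P) ∈ isometrySubmonoid Ω := by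
        simpa only [← mem_isometrySubmonoid, ← SetLike.le_def, Submonoid.closure_le] using hT
    _ ↔ ∀ P ∈ S, (Complex.I • P)ᵀ * Ω + Ω * (Complex.I • P) = 0 := by
        simp only [forall_exp_smul_mem_isometrySubmonoid_iff]
    _ ↔ ∀ P ∈ S, Pᵀ * Ω + Ω * P = 0 := by
        simp [transpose_smul, ← smul_add, Complex.I_ne_zero]

/-- For a group generated by `exp(iθP)` with `P` ranging over a set `S` of Hermitian
involutions, a matrix `Ω` is an invariant bilinear form (`UᵀΩU = Ω` for all `U` in the
generated group) iff `PᵀΩ + ΩP = 0` for every `P ∈ S`. -/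
theorem invariant_form_iff_generator_condition (d : ℕ)
    (S : Set (Matrix (Fin d) (Fin d) ℂ))
    (hS : ∀ P ∈ S, Pᴴ = P ∧ P * P = 1)
    (Ω : Matrix (Fin d) (Fin d) ℂ) :
    (∀ U ∈ Submonoid.closure
        {M : Matrix (Fin d) (Fin d) ℂ |
          ∃ θ : ℝ, ∃ P ∈ S, M = NormedSpace.exp ((θ : ℂ) • Complex.I • P)},
      Uᵀ * Ω * U = Ω) ↔ (∀ P ∈ S, Pᵀ * Ω + Ω * P = 0) :=
  invariant_form_iff_generator_condition_general d S Ω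
end

section
/- The n-qubit matchgate group, generated by {exp(iθ Z_k) : θ ∈ ℝ, 1 ≤ k ≤ n} and {exp(iθ X_k X_{k+1}) : θ ∈ ℝ, 1 ≤ k ≤ n-1}, preserves the bilinear forms Ω₁ = X⊗Y⊗X⊗Y⊗⋯ and Ω₂ = Y⊗X⊗Y⊗X⊗⋯ (alternating tensor products of Pauli X and Y on n qubits): for every generator P ∈ {Z_k, X_k X_{k+1}}, one has PᵀΩⱼ + ΩⱼP = 0 for j = 1, 2. -/
open Matrix

/-- The single-qubit Pauli `X`. -/
def pauliX : Matrix (Fin 2) (Fin 2) ℂ := !![0, 1; 1, 0]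
/-- The single-qubit Pauli `Y`. -/
def pauliY : Matrix (Fin 2) (Fin 2) ℂ := !![0, -Complex.I; Complex.I, 0]
/-- The single-qubit Pauli `Z`. -/
def pauliZ : Matrix (Fin 2) (Fin 2) ℂ := !![1, 0; 0, -1]

/-- The tensor product `⊗ⱼ p j` of single-qubit operators on `n` qubits,
as a matrix on `(ℂ²)^{⊗n}` with index set `Fin n → Fin 2`. -/
def pauliString {n : ℕ} (p : Fin n → Matrix (Fin 2) (Fin 2) ℂ) :
    Matrix (Fin n → Fin 2) (Fin n → Fin 2) ℂ :=
  fun f g => ∏ j, p j (f j) (g j)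

/-- `Z` on qubit `k`, identity elsewhere. -/
def Zgate {n : ℕ} (k : Fin n) : Matrix (Fin n → Fin 2) (Fin n → Fin 2) ℂ :=
  pauliString (fun j => if j = k then pauliZ else 1)

/-- `X` on qubits `k` and `k'`, identity elsewhere. -/
def XXgate {n : ℕ} (k k' : Fin n) : Matrix (Fin n → Fin 2) (Fin n → Fin 2) ℂ :=
  pauliString (fun j => if j = k ∨ j = k' then pauliX else 1)

/-- `Ω₁ = X ⊗ Y ⊗ X ⊗ Y ⊗ ⋯` : `X` on odd-indexed (`0`-based even) qubits. -/
def Omega1 (n : ℕ) : Matrix (Fin n → Fin 2) (Fin n → Fin 2) ℂ :=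
  pauliString (fun j => if Even (j : ℕ) then pauliX else pauliY)

/-- `Ω₂ = Y ⊗ X ⊗ Y ⊗ X ⊗ ⋯`. -/
def Omega2 (n : ℕ) : Matrix (Fin n → Fin 2) (Fin n → Fin 2) ℂ :=
  pauliString (fun j => if Even (j : ℕ) then pauliY else pauliX)

lemma ZX : pauliZ * pauliX = -(pauliX * pauliZ) := by
  ext i j; fin_cases i <;> fin_cases j <;>
    simp [pauliZ, pauliX, Matrix.mul_apply, Fin.sum_univ_two]

lemma ZY : pauliZ * pauliY = -(pauliY * pauliZ) := by
  ext i j; fin_cases i <;> fin_cases j <;>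
    simp [pauliZ, pauliY, Matrix.mul_apply, Fin.sum_univ_two]

lemma XY : pauliX * pauliY = -(pauliY * pauliX) := by
  ext i j; fin_cases i <;> fin_cases j <;>
    simp [pauliX, pauliY, Matrix.mul_apply, Fin.sum_univ_two]

lemma Zt : pauliZᵀ = pauliZ := by
  ext i j; fin_cases i <;> fin_cases j <;> simp [pauliZ]

lemma Xt : pauliXᵀ = pauliX := by
  ext i j; fin_cases i <;> fin_cases j <;> simp [pauliX]

lemma pauliString_transpose {n : ℕ} (p : Fin n → Matrix (Fin 2) (Fin 2) ℂ) :
    (pauliString p)ᵀ = pauliString (fun j => (p j)ᵀ) := by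
  ext f g; simp [pauliString, Matrix.transpose_apply]

lemma pauliString_mul {n : ℕ} (p q : Fin n → Matrix (Fin 2) (Fin 2) ℂ) :
    pauliString p * pauliString q = pauliString (fun j => p j * q j) := by
  ext f g
  simp only [Matrix.mul_apply, pauliString]
  rw [Finset.prod_univ_sum]
  rw [show (Fintype.piFinset fun _ : Fin n => (Finset.univ : Finset (Fin 2))) = Finset.univ from
    Fintype.piFinset_univ]
  exact Finset.sum_congr rfl fun x _ => (Finset.prod_mul_distrib).symm

lemma pauliString_add_eq_zero {n : ℕ} (p q : Fin n → Matrix (Fin 2) (Fin 2) ℂ) (k0 : Fin n)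
    (h1 : ∀ j, j ≠ k0 → p j = q j) (h2 : p k0 = -q k0) :
    pauliString p + pauliString q = 0 := by
  ext f g
  simp only [Matrix.add_apply, Matrix.zero_apply, pauliString]
  have key : ∀ j : Fin n, p j (f j) (g j) = (if j = k0 then (-1:ℂ) else 1) * q j (f j) (g j) := by
    intro j
    by_cases hj : j = k0
    · subst hj; simp [h2]
    · simp [hj, h1 j hj]
  rw [Finset.prod_congr rfl (fun j _ => key j), Finset.prod_mul_distrib,
      Finset.prod_ite_eq' Finset.univ k0 (fun _ => (-1:ℂ))]
  simp

lemma Zcase {n : ℕ} (k : Fin n) (ω : Fin n → Matrix (Fin 2) (Fin 2) ℂ)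
    (hω : ω k = pauliX ∨ ω k = pauliY) :
    (Zgate k)ᵀ * pauliString ω + pauliString ω * Zgate k = 0 := by
  rw [Zgate, pauliString_transpose, pauliString_mul, pauliString_mul]
  apply pauliString_add_eq_zero _ _ k
  · intro j hj; simp [hj]
  · simp only [eq_self_iff_true, if_true, Zt]
    rcases hω with h | h <;> rw [h]
    · exact ZX
    · exact ZY

lemma XXcase {n : ℕ} (k k' : Fin n) (ω : Fin n → Matrix (Fin 2) (Fin 2) ℂ) (k0 : Fin n)
    (hk0 : k0 = k ∨ k0 = k') (hY : ω k0 = pauliY)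
    (hX : ∀ j, (j = k ∨ j = k') → j ≠ k0 → ω j = pauliX) :
    (XXgate k k')ᵀ * pauliString ω + pauliString ω * XXgate k k' = 0 := by
  rw [XXgate, pauliString_transpose, pauliString_mul, pauliString_mul]
  apply pauliString_add_eq_zero _ _ k0
  · intro j hj
    by_cases hjm : j = k ∨ j = k'
    · simp only [if_pos hjm, Xt, hX j hjm hj]
    · simp [hjm]
  · have hm : k0 = k ∨ k0 = k' := hk0
    simp only [if_pos hm, Xt, hY]
    exact XY

/-- The generators `Z_k` and `X_k X_{k+1}` of the `n`-qubit matchgate group satisfy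
`PᵀΩⱼ + ΩⱼP = 0` for both alternating forms `Ω₁, Ω₂`; hence the matchgate group
preserves these bilinear forms. -/
theorem matchgate_preserves_alternating_forms (n : ℕ) :
    (∀ k : Fin n, ∀ Ω ∈ ({Omega1 n, Omega2 n} :
        Set (Matrix (Fin n → Fin 2) (Fin n → Fin 2) ℂ)),
      (Zgate k)ᵀ * Ω + Ω * Zgate k = 0) ∧
    (∀ k : Fin n, ∀ h : (k : ℕ) + 1 < n, ∀ Ω ∈ ({Omega1 n, Omega2 n} :
        Set (Matrix (Fin n → Fin 2) (Fin n → Fin 2) ℂ)),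
      (XXgate k ⟨(k : ℕ) + 1, h⟩)ᵀ * Ω + Ω * XXgate k ⟨(k : ℕ) + 1, h⟩ = 0) := by
  constructor
  · intro k Ω hΩ
    rcases hΩ with h | h <;> subst h <;> [rw [Omega1]; rw [Omega2]] <;>
      apply Zcase <;> by_cases hk : Even (k : ℕ) <;> simp [hk]
  · intro k h Ω hΩ
    set k' : Fin n := ⟨(k : ℕ) + 1, h⟩ with hk'
    have hne : k' ≠ k := by
      intro hcon
      have : (k : ℕ) + 1 = (k : ℕ) := congrArg Fin.val hcon
      omega
    have hpar : Even ((k' : ℕ)) ↔ ¬ Even ((k : ℕ)) := by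
      simp [hk', Nat.even_add_one]
    rcases hΩ with hΩ | hΩ <;> subst hΩ <;> [rw [Omega1]; rw [Omega2]] <;>
      by_cases hk : Even (k : ℕ)
    · -- Omega1, Even k : Y sits at k'
      apply XXcase k k' _ k' (Or.inr rfl)
      · simp [show ¬ Even ((k' : ℕ)) from fun hc => (hpar.mp hc) hk]
      · rintro j (rfl | rfl) hj
        · simp [hk]
        · exact absurd rfl hj
    · -- Omega1, ¬Even k : Y sits at k
      apply XXcase k k' _ k (Or.inl rfl)
      · simp [hk]
      · rintro j (rfl | rfl) hj
        · exact absurd rfl hj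
        · simp [hpar, hk]
    · -- Omega2, Even k : Y sits at k
      apply XXcase k k' _ k (Or.inl rfl)
      · simp [hk]
      · rintro j (rfl | rfl) hj
        · exact absurd rfl hj
        · simp [hpar, hk]
    · -- Omega2, ¬Even k : Y sits at k'
      apply XXcase k k' _ k' (Or.inr rfl)
      · simp [hpar.mpr hk]
      · rintro j (rfl | rfl) hj
        · simp [hk]
        · exact absurd rfl hj
end
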